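/- arXiv:1611.05162 — 4 statements merged into one kernel-verified Lean document; each statement's English description precedes it below -/
import Mathlib

section
/- Consider an L-layer ReLU network with weight matrices W_1,…,W_L satisfying ‖W_ℓ‖_{1} ≤ 1 for all ℓ, layer outputs Y^{(0)} = X and Y^{(ℓ)} = max(W_ℓᵀ Y^{(ℓ−1)}, 0). Suppose for each ℓ, the retrained matrix Ŵ_ℓ satisfies ‖Ŵ_ℓ‖_{1} ≤ ‖W_ℓ‖_{1}, and with respect to the original layer data: ∑_{(m,p): y^{(ℓ)}_{m,p}>0} (ŵ_{ℓ,m}ᵀ y^{(ℓ−1)}_p − y^{(ℓ)}_{m,p})² ≤ ε_ℓ² and ŵ_{ℓ,m}ᵀ y^{(ℓ−1)}_p ≤ 0 whenever y^{(ℓ)}_{m,p} = 0. Define the retrained outputs Ŷ^{(0)} = X, Ŷ^{(ℓ)} = max(Ŵ_ℓᵀ Ŷ^{(ℓ−1)}, 0). Then for every ℓ, ‖Ŷ^{(ℓ)} − Y^{(ℓ)}‖_F ≤ ∑_{j=1}^{ℓ} ε_j. -/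
open Finset

/-- Minkowski-type inequality for finite sums. -/
private lemma sqrt_sum_sq_add_le {ι : Type*} (s : Finset ι) (a b : ι → ℝ) :
    Real.sqrt (∑ i ∈ s, (a i + b i) ^ 2) ≤
      Real.sqrt (∑ i ∈ s, a i ^ 2) + Real.sqrt (∑ i ∈ s, b i ^ 2) := by
  have hA : (0:ℝ) ≤ ∑ i ∈ s, a i ^ 2 := Finset.sum_nonneg fun i _ => sq_nonneg _
  have hB : (0:ℝ) ≤ ∑ i ∈ s, b i ^ 2 := Finset.sum_nonneg fun i _ => sq_nonneg _
  have hcs : (∑ i ∈ s, a i * b i) ≤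
      Real.sqrt (∑ i ∈ s, a i ^ 2) * Real.sqrt (∑ i ∈ s, b i ^ 2) := by
    have h1 := Finset.sum_mul_sq_le_sq_mul_sq s a b
    have h2 : (∑ i ∈ s, a i * b i) ≤ Real.sqrt ((∑ i ∈ s, a i * b i) ^ 2) := by
      rw [Real.sqrt_sq_eq_abs]; exact le_abs_self _
    calc (∑ i ∈ s, a i * b i) ≤ Real.sqrt ((∑ i ∈ s, a i * b i) ^ 2) := h2
      _ ≤ Real.sqrt ((∑ i ∈ s, a i ^ 2) * ∑ i ∈ s, b i ^ 2) := Real.sqrt_le_sqrt h1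
      _ = Real.sqrt (∑ i ∈ s, a i ^ 2) * Real.sqrt (∑ i ∈ s, b i ^ 2) := Real.sqrt_mul hA _
  have hkey : (∑ i ∈ s, (a i + b i) ^ 2) ≤
      (Real.sqrt (∑ i ∈ s, a i ^ 2) + Real.sqrt (∑ i ∈ s, b i ^ 2)) ^ 2 := by
    have e : (∑ i ∈ s, (a i + b i) ^ 2)
        = (∑ i ∈ s, a i ^ 2) + (∑ i ∈ s, b i ^ 2) + 2 * ∑ i ∈ s, a i * b i := by
      rw [← Finset.sum_add_distrib, Finset.mul_sum, ← Finset.sum_add_distrib]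
      exact Finset.sum_congr rfl fun i _ => by ring
    have ha2 : Real.sqrt (∑ i ∈ s, a i ^ 2) ^ 2 = ∑ i ∈ s, a i ^ 2 := Real.sq_sqrt hA
    have hb2 : Real.sqrt (∑ i ∈ s, b i ^ 2) ^ 2 = ∑ i ∈ s, b i ^ 2 := Real.sq_sqrt hB
    nlinarith [hcs]
  calc Real.sqrt (∑ i ∈ s, (a i + b i) ^ 2)
      ≤ Real.sqrt ((Real.sqrt (∑ i ∈ s, a i ^ 2) + Real.sqrt (∑ i ∈ s, b i ^ 2)) ^ 2) :=
        Real.sqrt_le_sqrt hkey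
    _ = Real.sqrt (∑ i ∈ s, a i ^ 2) + Real.sqrt (∑ i ∈ s, b i ^ 2) :=
        Real.sqrt_sq (by positivity)

/-- Operator-type bound: if the entrywise ℓ1 norm of `M` is at most 1, then
`‖Mᵀ D‖_F ≤ ‖D‖_F` (squared version). -/
private lemma netTrim_op_bound {n m P : ℕ} (M : Matrix (Fin n) (Fin m) ℝ)
    (D : Fin n → Fin P → ℝ) (hM : ∑ i, ∑ j, |M i j| ≤ 1) :
    ∑ mm, ∑ p, (∑ k, M k mm * D k p) ^ 2 ≤ ∑ k, ∑ p, (D k p) ^ 2 := by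
  have hcol : ∀ mm : Fin m, ∑ k, |M k mm| ≤ 1 := by
    intro mm
    refine le_trans (Finset.sum_le_sum fun k _ => ?_) hM
    exact Finset.single_le_sum (f := fun j => |M k j|) (fun j _ => abs_nonneg _) (mem_univ mm)
  have hrow : ∀ k : Fin n, ∑ mm, |M k mm| ≤ 1 := by
    intro k
    refine le_trans ?_ hM
    exact Finset.single_le_sum (f := fun i => ∑ j, |M i j|)
      (fun i _ => Finset.sum_nonneg fun j _ => abs_nonneg _) (mem_univ k)
  have key : ∀ (mm : Fin m) (p : Fin P),
      (∑ k, M k mm * D k p) ^ 2 ≤ ∑ k, |M k mm| * (D k p) ^ 2 := by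
    intro mm p
    have h1 : |∑ k, M k mm * D k p| ≤ ∑ k, |M k mm| * |D k p| := by
      refine le_trans (Finset.abs_sum_le_sum_abs _ _) ?_
      exact Finset.sum_le_sum fun k _ => le_of_eq (abs_mul _ _)
    have h2 : (∑ k, M k mm * D k p) ^ 2 ≤ (∑ k, |M k mm| * |D k p|) ^ 2 := by
      rw [← sq_abs]
      exact pow_le_pow_left₀ (abs_nonneg _) h1 2
    have hcs := Finset.sum_mul_sq_le_sq_mul_sq Finset.univ
      (fun k => Real.sqrt |M k mm|) (fun k => Real.sqrt |M k mm| * |D k p|)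
    have e1 : ∀ k : Fin n, Real.sqrt |M k mm| * (Real.sqrt |M k mm| * |D k p|)
        = |M k mm| * |D k p| := by
      intro k; rw [← mul_assoc, Real.mul_self_sqrt (abs_nonneg _)]
    have e2 : ∀ k : Fin n, (Real.sqrt |M k mm|) ^ 2 = |M k mm| := fun k =>
      Real.sq_sqrt (abs_nonneg _)
    have e3 : ∀ k : Fin n, (Real.sqrt |M k mm| * |D k p|) ^ 2 = |M k mm| * (D k p) ^ 2 := by
      intro k; rw [mul_pow, Real.sq_sqrt (abs_nonneg _), sq_abs]
    rw [Finset.sum_congr rfl (fun k _ => e1 k), Finset.sum_congr rfl (fun k _ => e2 k),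
      Finset.sum_congr rfl (fun k _ => e3 k)] at hcs
    have hinner : (0:ℝ) ≤ ∑ k, |M k mm| * (D k p) ^ 2 :=
      Finset.sum_nonneg fun k _ => mul_nonneg (abs_nonneg _) (sq_nonneg _)
    calc (∑ k, M k mm * D k p) ^ 2 ≤ (∑ k, |M k mm| * |D k p|) ^ 2 := h2
      _ ≤ (∑ k, |M k mm|) * ∑ k, |M k mm| * (D k p) ^ 2 := hcs
      _ ≤ 1 * ∑ k, |M k mm| * (D k p) ^ 2 := by
          exact mul_le_mul_of_nonneg_right (hcol mm) hinner
      _ = ∑ k, |M k mm| * (D k p) ^ 2 := one_mul _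
  calc ∑ mm, ∑ p, (∑ k, M k mm * D k p) ^ 2
      ≤ ∑ mm, ∑ p, ∑ k, |M k mm| * (D k p) ^ 2 :=
        Finset.sum_le_sum fun mm _ => Finset.sum_le_sum fun p _ => key mm p
    _ = ∑ k, (∑ mm : Fin m, |M k mm|) * ∑ p, (D k p) ^ 2 := by
        have e1 : ∀ mm : Fin m, ∑ p, ∑ k, |M k mm| * (D k p) ^ 2
            = ∑ k, |M k mm| * ∑ p, (D k p) ^ 2 := by
          intro mm
          rw [Finset.sum_comm]
          exact Finset.sum_congr rfl fun k _ => (Finset.mul_sum _ _ _).symm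
        rw [Finset.sum_congr rfl fun mm _ => e1 mm, Finset.sum_comm]
        exact Finset.sum_congr rfl fun k _ => (Finset.sum_mul _ _ _).symm
    _ ≤ ∑ k, 1 * ∑ p, (D k p) ^ 2 := by
        refine Finset.sum_le_sum fun k _ => ?_
        exact mul_le_mul_of_nonneg_right (hrow k)
          (Finset.sum_nonneg fun p _ => sq_nonneg _)
    _ = ∑ k, ∑ p, (D k p) ^ 2 := by simp

/-- Double-sum version of the Minkowski inequality. -/
private lemma sqrt_dsum_sq_add_le {ι κ : Type*} [Fintype ι] [Fintype κ] (a b : ι → κ → ℝ) :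
    Real.sqrt (∑ i, ∑ j, (a i j + b i j) ^ 2) ≤
      Real.sqrt (∑ i, ∑ j, a i j ^ 2) + Real.sqrt (∑ i, ∑ j, b i j ^ 2) := by
  have h := sqrt_sum_sq_add_le (Finset.univ ×ˢ Finset.univ)
    (fun x : ι × κ => a x.1 x.2) (fun x : ι × κ => b x.1 x.2)
  rw [← Finset.sum_product' (f := fun i j => (a i j + b i j) ^ 2),
    ← Finset.sum_product' (f := fun i j => a i j ^ 2),
    ← Finset.sum_product' (f := fun i j => b i j ^ 2)]
  exact h

/-- Theorem 1 (parallel Net-Trim): for a link-normalized network, if every layer is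
retrained satisfying the relaxed constraints with parameters `ε_ℓ` (relative to the
original layer data) and the retrained matrices have no larger entrywise ℓ1 norm, then
the error of the retrained cascade at layer `ℓ` is at most `∑_{j=1}^ℓ ε_j`. -/
theorem netTrim_parallel_error_accumulation
    (d : ℕ → ℕ) (P L : ℕ)
    (W What : (ℓ : ℕ) → Matrix (Fin (d ℓ)) (Fin (d (ℓ + 1))) ℝ)
    (Y Yhat : (ℓ : ℕ) → Matrix (Fin (d ℓ)) (Fin P) ℝ)
    (ε : ℕ → ℝ) (hε : ∀ j, 0 ≤ ε j)
    (hY : ∀ ℓ < L, ∀ m p, Y (ℓ + 1) m p = max (∑ k, W ℓ k m * Y ℓ k p) 0)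
    (hYhat0 : Yhat 0 = Y 0)
    (hYhat : ∀ ℓ < L, ∀ m p, Yhat (ℓ + 1) m p = max (∑ k, What ℓ k m * Yhat ℓ k p) 0)
    (hWnorm : ∀ ℓ < L, ∑ i, ∑ j, |W ℓ i j| ≤ 1)
    (hWhatnorm : ∀ ℓ < L, ∑ i, ∑ j, |What ℓ i j| ≤ ∑ i, ∑ j, |W ℓ i j|)
    (hfeas1 : ∀ ℓ < L,
      ∑ m, ∑ p, (if 0 < Y (ℓ + 1) m p then
          (∑ k, What ℓ k m * Y ℓ k p - Y (ℓ + 1) m p) ^ 2 else 0) ≤ (ε (ℓ + 1)) ^ 2)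
    (hfeas2 : ∀ ℓ < L, ∀ m p, Y (ℓ + 1) m p = 0 → ∑ k, What ℓ k m * Y ℓ k p ≤ 0) :
    ∀ ℓ ≤ L, Real.sqrt (∑ m, ∑ p, (Yhat ℓ m p - Y ℓ m p) ^ 2) ≤
      ∑ j ∈ Finset.Icc 1 ℓ, ε j := by
  intro ℓ
  induction ℓ with
  | zero =>
    intro _
    simp [hYhat0]
  | succ n ih =>
    intro hn1
    have hnL : n < L := hn1
    have hIH := ih (Nat.le_of_lt hnL)
    -- abbreviations
    set A : Fin (d (n + 1)) → Fin P → ℝ := fun m p =>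
      max (∑ k, What n k m * Yhat n k p) 0 - max (∑ k, What n k m * Y n k p) 0 with hA
    set B : Fin (d (n + 1)) → Fin P → ℝ := fun m p =>
      max (∑ k, What n k m * Y n k p) 0 - Y (n + 1) m p with hB
    have hsplit : ∀ m p, Yhat (n + 1) m p - Y (n + 1) m p = A m p + B m p := by
      intro m p
      rw [hYhat n hnL m p, hA, hB]
      ring
    -- Minkowski split
    have hmink : Real.sqrt (∑ m, ∑ p, (Yhat (n + 1) m p - Y (n + 1) m p) ^ 2) ≤
        Real.sqrt (∑ m, ∑ p, (A m p) ^ 2) + Real.sqrt (∑ m, ∑ p, (B m p) ^ 2) := by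
      have e : ∑ m, ∑ p, (Yhat (n + 1) m p - Y (n + 1) m p) ^ 2
          = ∑ m, ∑ p, (A m p + B m p) ^ 2 :=
        Finset.sum_congr rfl fun m _ => Finset.sum_congr rfl fun p _ => by rw [hsplit]
      rw [e]
      exact sqrt_dsum_sq_add_le A B
    -- bound the A part
    have hAle : Real.sqrt (∑ m, ∑ p, (A m p) ^ 2) ≤ ∑ j ∈ Finset.Icc 1 n, ε j := by
      have hptA : ∀ m p, (A m p) ^ 2 ≤ (∑ k, What n k m * (Yhat n k p - Y n k p)) ^ 2 := by
        intro m p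
        have habs : |A m p| ≤ |∑ k, What n k m * Yhat n k p - ∑ k, What n k m * Y n k p| :=
          abs_max_sub_max_le_abs _ _ _
        have hdiff : ∑ k, What n k m * Yhat n k p - ∑ k, What n k m * Y n k p
            = ∑ k, What n k m * (Yhat n k p - Y n k p) := by
          rw [← Finset.sum_sub_distrib]
          exact Finset.sum_congr rfl fun k _ => (mul_sub _ _ _).symm
        rw [hdiff] at habs
        calc (A m p) ^ 2 = |A m p| ^ 2 := (sq_abs _).symm
          _ ≤ |∑ k, What n k m * (Yhat n k p - Y n k p)| ^ 2 :=
            pow_le_pow_left₀ (abs_nonneg _) habs 2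
          _ = (∑ k, What n k m * (Yhat n k p - Y n k p)) ^ 2 := sq_abs _
      have hMnorm : ∑ i, ∑ j, |What n i j| ≤ 1 := le_trans (hWhatnorm n hnL) (hWnorm n hnL)
      have hop := netTrim_op_bound (What n) (fun k p => Yhat n k p - Y n k p) hMnorm
      have hsum : ∑ m, ∑ p, (A m p) ^ 2 ≤ ∑ k, ∑ p, (Yhat n k p - Y n k p) ^ 2 :=
        le_trans (Finset.sum_le_sum fun m _ => Finset.sum_le_sum fun p _ => hptA m p) hop
      calc Real.sqrt (∑ m, ∑ p, (A m p) ^ 2)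
          ≤ Real.sqrt (∑ k, ∑ p, (Yhat n k p - Y n k p) ^ 2) := Real.sqrt_le_sqrt hsum
        _ ≤ ∑ j ∈ Finset.Icc 1 n, ε j := hIH
    -- bound the B part
    have hBle : Real.sqrt (∑ m, ∑ p, (B m p) ^ 2) ≤ ε (n + 1) := by
      have hptB : ∀ m p, (B m p) ^ 2 ≤ (if 0 < Y (n + 1) m p then
          (∑ k, What n k m * Y n k p - Y (n + 1) m p) ^ 2 else 0) := by
        intro m p
        by_cases h : 0 < Y (n + 1) m p
        · simp only [if_pos h]
          have hYmax : Y (n + 1) m p = max (Y (n + 1) m p) 0 := (max_eq_left h.le).symm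
          have habs : |B m p| ≤ |∑ k, What n k m * Y n k p - Y (n + 1) m p| := by
            rw [hB]
            calc |max (∑ k, What n k m * Y n k p) 0 - Y (n + 1) m p|
                = |max (∑ k, What n k m * Y n k p) 0 - max (Y (n + 1) m p) 0| := by
                  rw [← hYmax]
              _ ≤ |∑ k, What n k m * Y n k p - Y (n + 1) m p| := abs_max_sub_max_le_abs _ _ _
          calc (B m p) ^ 2 = |B m p| ^ 2 := (sq_abs _).symm
            _ ≤ |∑ k, What n k m * Y n k p - Y (n + 1) m p| ^ 2 :=
              pow_le_pow_left₀ (abs_nonneg _) habs 2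
            _ = (∑ k, What n k m * Y n k p - Y (n + 1) m p) ^ 2 := sq_abs _
        · simp only [if_neg h]
          have hY0 : Y (n + 1) m p = 0 := by
            have hge : 0 ≤ Y (n + 1) m p := by
              rw [hY n hnL m p]; exact le_max_right _ _
            exact le_antisymm (not_lt.mp h) hge
          have hs := hfeas2 n hnL m p hY0
          have : B m p = 0 := by
            rw [hB]; simp [max_eq_right hs, hY0]
          rw [this]; simp
      have hsum : ∑ m, ∑ p, (B m p) ^ 2 ≤ (ε (n + 1)) ^ 2 :=
        le_trans (Finset.sum_le_sum fun m _ => Finset.sum_le_sum fun p _ => hptB m p)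
          (hfeas1 n hnL)
      calc Real.sqrt (∑ m, ∑ p, (B m p) ^ 2) ≤ Real.sqrt ((ε (n + 1)) ^ 2) :=
          Real.sqrt_le_sqrt hsum
        _ = ε (n + 1) := Real.sqrt_sq (hε _)
    have hIcc : ∑ j ∈ Finset.Icc 1 (n + 1), ε j
        = (∑ j ∈ Finset.Icc 1 n, ε j) + ε (n + 1) :=
      Finset.sum_Icc_succ_top (Nat.succ_le_succ (Nat.zero_le n)) ε
    rw [hIcc]
    linarith
end

section
/- Consider an L-layer ReLU network with link-normalized weights ‖W_ℓ‖_{1} ≤ 1, original outputs Y^{(ℓ)} = max(W_ℓᵀ Y^{(ℓ−1)}, 0) with Y^{(0)} = X. Suppose the retrained matrices satisfy: ‖Ŷ^{(1)} − Y^{(1)}‖_F ≤ ε_1, and for ℓ ≥ 2, Ŵ_ℓ is feasible for the cascade constraint set C_{ε_ℓ}(Ŷ^{(ℓ−1)}, Y^{(ℓ)}, W_ℓᵀ Ŷ^{(ℓ−1)}), i.e., ∑_{(m,p): y^{(ℓ)}_{m,p}>0} (ŵ_{ℓ,m}ᵀ ŷ^{(ℓ−1)}_p − y^{(ℓ)}_{m,p})²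 ≤ ε_ℓ² and ŵ_{ℓ,m}ᵀ ŷ^{(ℓ−1)}_p ≤ w_{ℓ,m}ᵀ ŷ^{(ℓ−1)}_p whenever y^{(ℓ)}_{m,p} = 0, where ε_ℓ² = γ_ℓ ∑_{(m,p): y^{(ℓ)}_{m,p}>0} (w_{ℓ,m}ᵀ ŷ^{(ℓ−1)}_p − y^{(ℓ)}_{m,p})² with γ_ℓ > 1. Then with Ŷ^{(ℓ)} = max(Ŵ_ℓᵀ Ŷ^{(ℓ−1)}, 0), for every ℓ: ‖Ŷ^{(ℓ)} − Y^{(ℓ)}‖_F ≤ ε_1 √(∏_{j=2}^ℓ γ_j). -/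
open Finset

/-!
On the entries where the original layer is active, the ReLU is 1-Lipschitz, so the retrained
error is controlled by the fitting constraint, which is at most `γ_ℓ` times the error of the
original weights applied to the retrained input. On the inactive entries the inequality
constraint keeps the retrained pre-activation below `w_mᵀ ŷ_p`, whose positive part is bounded by
`|w_mᵀ (ŷ_p - y_p)|`. Both pieces together are bounded by `γ_ℓ ‖W_ℓᵀ (Ŷ - Y)‖_F²`, and
`‖W_ℓ‖_1 ≤ 1` makes `W_ℓᵀ` a contraction for the Frobenius norm. The squared error thus grows by
at most the factor `γ_ℓ` per layer.
-/

theorem sq_max_zero_sub_le (a : ℝ) {b : ℝ} (hb : 0 ≤ b) : (max a 0 - b) ^ 2 ≤ (a - b) ^ 2 := by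
  have h := abs_max_sub_max_le_abs a b 0
  rw [max_eq_left hb] at h
  exact sq_le_sq.mpr (by simpa only [abs_abs] using h)

theorem sq_max_zero_le_sq_sub {a u z : ℝ} (ha : a ≤ u) (hz : z ≤ 0) :
    max a 0 ^ 2 ≤ (u - z) ^ 2 := by
  have h : max a 0 ≤ |u - z| :=
    max_le (by linarith [le_abs_self (u - z)]) (abs_nonneg _)
  simpa only [sq_abs] using pow_le_pow_left₀ (le_max_right a 0) h 2

/-- `z` and `zh` are the original and retrained pre-activations, `u` is the pre-activation of the
original weights on the retrained input. -/
theorem sq_relu_err_le {y z zh u : ℝ} (hy : y = max z 0) (hinactive : y = 0 → zh ≤ u) :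
    (max zh 0 - y) ^ 2 ≤
      (if 0 < y then (zh - y) ^ 2 else 0) + (if 0 < y then 0 else (u - z) ^ 2) := by
  split_ifs with hpos
  · simpa only [add_zero] using sq_max_zero_sub_le zh hpos.le
  · have hy0 : y = 0 := le_antisymm (not_lt.mp hpos) (hy ▸ le_max_right z 0)
    rw [hy0, sub_zero, zero_add]
    exact sq_max_zero_le_sq_sub (hinactive hy0) (max_eq_right_iff.mp (hy0 ▸ hy).symm)

theorem sq_sub_eq_ite_add_ite {y z : ℝ} (hy : y = max z 0) (u : ℝ) :
    (u - z) ^ 2 = (if 0 < y then (u - y) ^ 2 else 0) + (if 0 < y then 0 else (u - z) ^ 2) := by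
  split_ifs with hpos
  · have hz : 0 < z := by simpa [hy] using hpos
    rw [add_zero, hy, max_eq_left hz.le]
  · rw [zero_add]

section Matrix

variable {κ μ π : Type*} [Fintype κ] [Fintype μ] [Fintype π]

theorem sum_sq_sum_mul_le (W : Matrix κ μ ℝ) (D : Matrix κ π ℝ) :
    ∑ m, ∑ p, (∑ k, W k m * D k p) ^ 2 ≤ (∑ k, ∑ m, W k m ^ 2) * ∑ k, ∑ p, D k p ^ 2 :=
  calc ∑ m, ∑ p, (∑ k, W k m * D k p) ^ 2
      ≤ ∑ m, ∑ p, (∑ k, W k m ^ 2) * ∑ k, D k p ^ 2 := by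
        gcongr with m _ p _
        exact sum_mul_sq_le_sq_mul_sq _ _ _
    _ = (∑ k, ∑ m, W k m ^ 2) * ∑ k, ∑ p, D k p ^ 2 := by
        rw [sum_comm (f := fun k m => W k m ^ 2), sum_comm (f := fun k p => D k p ^ 2),
          sum_mul_sum]

theorem sum_sq_le_sq_sum_abs (W : Matrix κ μ ℝ) :
    ∑ k, ∑ m, W k m ^ 2 ≤ (∑ k, ∑ m, |W k m|) ^ 2 :=
  calc ∑ k, ∑ m, W k m ^ 2 = ∑ k, ∑ m, |W k m| ^ 2 := by simp only [sq_abs]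
    _ ≤ ∑ k, (∑ m, |W k m|) ^ 2 := by
        gcongr with k _
        exact sum_sq_le_sq_sum_of_nonneg fun m _ => abs_nonneg _
    _ ≤ (∑ k, ∑ m, |W k m|) ^ 2 :=
        sum_sq_le_sq_sum_of_nonneg fun k _ => sum_nonneg fun m _ => abs_nonneg _

theorem sum_sq_sum_mul_le_of_sum_abs_le_one {W : Matrix κ μ ℝ} (hW : ∑ k, ∑ m, |W k m| ≤ 1)
    (D : Matrix κ π ℝ) :
    ∑ m, ∑ p, (∑ k, W k m * D k p) ^ 2 ≤ ∑ k, ∑ p, D k p ^ 2 := by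
  have hW2 : ∑ k, ∑ m, W k m ^ 2 ≤ 1 := by
    have h0 : 0 ≤ ∑ k, ∑ m, |W k m| := sum_nonneg fun k _ => sum_nonneg fun m _ => abs_nonneg _
    nlinarith [sum_sq_le_sq_sum_abs W]
  calc ∑ m, ∑ p, (∑ k, W k m * D k p) ^ 2
      ≤ (∑ k, ∑ m, W k m ^ 2) * ∑ k, ∑ p, D k p ^ 2 := sum_sq_sum_mul_le W D
    _ ≤ ∑ k, ∑ p, D k p ^ 2 :=
        mul_le_of_le_one_left (sum_nonneg fun k _ => sum_nonneg fun p _ => sq_nonneg _) hW2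

theorem relu_layer_sq_err_le (W What : Matrix κ μ ℝ) (X Xhat : Matrix κ π ℝ)
    (Y Yhat : Matrix μ π ℝ) {γ : ℝ} (hγ : 1 ≤ γ)
    (hY : ∀ m p, Y m p = max (∑ k, W k m * X k p) 0)
    (hYhat : ∀ m p, Yhat m p = max (∑ k, What k m * Xhat k p) 0)
    (hW : ∑ k, ∑ m, |W k m| ≤ 1)
    (hfit : ∑ m, ∑ p, (if 0 < Y m p then (∑ k, What k m * Xhat k p - Y m p) ^ 2 else 0) ≤
      γ * ∑ m, ∑ p, (if 0 < Y m p then (∑ k, W k m * Xhat k p - Y m p) ^ 2 else 0))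
    (hinactive : ∀ m p, Y m p = 0 → ∑ k, What k m * Xhat k p ≤ ∑ k, W k m * Xhat k p) :
    ∑ m, ∑ p, (Yhat m p - Y m p) ^ 2 ≤ γ * ∑ k, ∑ p, (Xhat k p - X k p) ^ 2 := by
  set u : Matrix μ π ℝ := fun m p => ∑ k, W k m * Xhat k p
  set z : Matrix μ π ℝ := fun m p => ∑ k, W k m * X k p
  set A := ∑ m, ∑ p, (if 0 < Y m p then (∑ k, What k m * Xhat k p - Y m p) ^ 2 else 0)
  set B := ∑ m, ∑ p, (if 0 < Y m p then (u m p - Y m p) ^ 2 else 0)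
  set C := ∑ m, ∑ p, (if 0 < Y m p then 0 else (u m p - z m p) ^ 2)
  have hC : 0 ≤ C := sum_nonneg fun m _ => sum_nonneg fun p _ => by split_ifs <;> positivity
  have hsplit : ∑ m, ∑ p, (Yhat m p - Y m p) ^ 2 ≤ A + C := by
    simp only [A, C, ← sum_add_distrib, hYhat]
    gcongr with m _ p _
    exact sq_relu_err_le (hY m p) (hinactive m p)
  have hBC : B + C = ∑ m, ∑ p, (u m p - z m p) ^ 2 := by
    simp only [B, C, ← sum_add_distrib]
    exact sum_congr rfl fun m _ => sum_congr rfl fun p _ => (sq_sub_eq_ite_add_ite (hY m p) _).symm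
  have hdiff : ∀ m p, u m p - z m p = ∑ k, W k m * (Xhat k p - X k p) := by
    simp only [u, z, mul_sub, sum_sub_distrib, implies_true]
  calc ∑ m, ∑ p, (Yhat m p - Y m p) ^ 2 ≤ A + C := hsplit
    _ ≤ γ * B + C := by gcongr
    _ ≤ γ * (B + C) := by nlinarith
    _ = γ * ∑ m, ∑ p, (∑ k, W k m * (Xhat k p - X k p)) ^ 2 := by simp only [hBC, hdiff]
    _ ≤ γ * ∑ k, ∑ p, (Xhat k p - X k p) ^ 2 := by
        gcongr
        exact sum_sq_sum_mul_le_of_sum_abs_le_one hW fun k p => Xhat k p - X k p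

end Matrix

theorem le_mul_prod_Icc_of_le_mul {e γ : ℕ → ℝ} {c : ℝ} {L : ℕ} (h₁ : e 1 ≤ c)
    (hγ : ∀ n, 1 ≤ n → n < L → 0 ≤ γ (n + 1))
    (hstep : ∀ n, 1 ≤ n → n < L → e (n + 1) ≤ γ (n + 1) * e n) :
    ∀ ℓ, 1 ≤ ℓ → ℓ ≤ L → e ℓ ≤ c * ∏ j ∈ Icc 2 ℓ, γ j := by
  refine Nat.le_induction (fun _ => by simpa using h₁) fun n hn ih hnL => ?_
  calc e (n + 1) ≤ γ (n + 1) * e n := hstep n hn hnL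
    _ ≤ γ (n + 1) * (c * ∏ j ∈ Icc 2 n, γ j) := by
        gcongr
        exacts [hγ n hn hnL, ih (by omega)]
    _ = c * ∏ j ∈ Icc 2 (n + 1), γ j := by
        rw [prod_Icc_succ_top (by omega : 2 ≤ n + 1)]
        ring

theorem netTrim_cascade_error_bound_general
    (d : ℕ → ℕ) (P L : ℕ)
    (W What : (ℓ : ℕ) → Matrix (Fin (d ℓ)) (Fin (d (ℓ + 1))) ℝ)
    (Y Yhat : (ℓ : ℕ) → Matrix (Fin (d ℓ)) (Fin P) ℝ)
    (γ : ℕ → ℝ) (ε₁ : ℝ) (hε₁ : 0 ≤ ε₁)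
    (hγ : ∀ ℓ, 2 ≤ ℓ → ℓ ≤ L → 1 < γ ℓ)
    (hY : ∀ ℓ < L, ∀ m p, Y (ℓ + 1) m p = max (∑ k, W ℓ k m * Y ℓ k p) 0)
    (hYhat : ∀ ℓ < L, ∀ m p, Yhat (ℓ + 1) m p = max (∑ k, What ℓ k m * Yhat ℓ k p) 0)
    (hWnorm : ∀ ℓ < L, ∑ i, ∑ j, |W ℓ i j| ≤ 1)
    (hfirst : Real.sqrt (∑ m, ∑ p, (Yhat 1 m p - Y 1 m p) ^ 2) ≤ ε₁)
    (hfeas1 : ∀ ℓ, 1 ≤ ℓ → ℓ < L →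
      ∑ m, ∑ p, (if 0 < Y (ℓ + 1) m p then
          (∑ k, What ℓ k m * Yhat ℓ k p - Y (ℓ + 1) m p) ^ 2 else 0) ≤
        γ (ℓ + 1) *
          ∑ m, ∑ p, (if 0 < Y (ℓ + 1) m p then
            (∑ k, W ℓ k m * Yhat ℓ k p - Y (ℓ + 1) m p) ^ 2 else 0))
    (hfeas2 : ∀ ℓ, 1 ≤ ℓ → ℓ < L → ∀ m p, Y (ℓ + 1) m p = 0 →
      ∑ k, What ℓ k m * Yhat ℓ k p ≤ ∑ k, W ℓ k m * Yhat ℓ k p) :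
    ∀ ℓ, 1 ≤ ℓ → ℓ ≤ L →
      Real.sqrt (∑ m, ∑ p, (Yhat ℓ m p - Y ℓ m p) ^ 2) ≤
        ε₁ * Real.sqrt (∏ j ∈ Finset.Icc 2 ℓ, γ j) := by
  intro ℓ h₁ hL
  have hγ₁ : ∀ n, 1 ≤ n → n < L → 1 ≤ γ (n + 1) := fun n hn hnL => (hγ _ (by omega) hnL).le
  have hsq : ∑ m, ∑ p, (Yhat ℓ m p - Y ℓ m p) ^ 2 ≤ ε₁ ^ 2 * ∏ j ∈ Icc 2 ℓ, γ j :=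
    le_mul_prod_Icc_of_le_mul (e := fun ℓ => ∑ m, ∑ p, (Yhat ℓ m p - Y ℓ m p) ^ 2)
      ((Real.sqrt_le_left hε₁).mp hfirst)
      (fun n hn hnL => zero_le_one.trans (hγ₁ n hn hnL))
      (fun n hn hnL => relu_layer_sq_err_le (W n) (What n) (Y n) (Yhat n) (Y (n + 1))
        (Yhat (n + 1)) (hγ₁ n hn hnL) (hY n hnL) (hYhat n hnL) (hWnorm n hnL)
        (hfeas1 n hn hnL) (hfeas2 n hn hnL))
      ℓ h₁ hL
  calc Real.sqrt (∑ m, ∑ p, (Yhat ℓ m p - Y ℓ m p) ^ 2)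
      ≤ Real.sqrt (ε₁ ^ 2 * ∏ j ∈ Icc 2 ℓ, γ j) := Real.sqrt_le_sqrt hsq
    _ = ε₁ * Real.sqrt (∏ j ∈ Icc 2 ℓ, γ j) := by
        rw [Real.sqrt_mul (sq_nonneg ε₁), Real.sqrt_sq hε₁]

/-- Theorem 2 (cascade Net-Trim): for a link-normalized network where the first layer is
retrained within `ε₁` and each subsequent layer `ℓ ≥ 2` is retrained feasibly for the
cascade constraint set with inflation rate `γ_ℓ > 1`, the error of the retrained network
at layer `ℓ` is at most `ε₁ √(∏_{j=2}^ℓ γ_j)`. -/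
theorem netTrim_cascade_error_bound
    (d : ℕ → ℕ) (P L : ℕ)
    (W What : (ℓ : ℕ) → Matrix (Fin (d ℓ)) (Fin (d (ℓ + 1))) ℝ)
    (Y Yhat : (ℓ : ℕ) → Matrix (Fin (d ℓ)) (Fin P) ℝ)
    (γ : ℕ → ℝ) (ε₁ : ℝ) (hε₁ : 0 ≤ ε₁)
    (hγ : ∀ ℓ, 2 ≤ ℓ → ℓ ≤ L → 1 < γ ℓ)
    (hY : ∀ ℓ < L, ∀ m p, Y (ℓ + 1) m p = max (∑ k, W ℓ k m * Y ℓ k p) 0)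
    (hYhat0 : Yhat 0 = Y 0)
    (hYhat : ∀ ℓ < L, ∀ m p, Yhat (ℓ + 1) m p = max (∑ k, What ℓ k m * Yhat ℓ k p) 0)
    (hWnorm : ∀ ℓ < L, ∑ i, ∑ j, |W ℓ i j| ≤ 1)
    (hfirst : Real.sqrt (∑ m, ∑ p, (Yhat 1 m p - Y 1 m p) ^ 2) ≤ ε₁)
    (hfeas1 : ∀ ℓ, 1 ≤ ℓ → ℓ < L →
      ∑ m, ∑ p, (if 0 < Y (ℓ + 1) m p then
          (∑ k, What ℓ k m * Yhat ℓ k p - Y (ℓ + 1) m p) ^ 2 else 0) ≤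
        γ (ℓ + 1) *
          ∑ m, ∑ p, (if 0 < Y (ℓ + 1) m p then
            (∑ k, W ℓ k m * Yhat ℓ k p - Y (ℓ + 1) m p) ^ 2 else 0))
    (hfeas2 : ∀ ℓ, 1 ≤ ℓ → ℓ < L → ∀ m p, Y (ℓ + 1) m p = 0 →
      ∑ k, What ℓ k m * Yhat ℓ k p ≤ ∑ k, W ℓ k m * Yhat ℓ k p) :
    ∀ ℓ, 1 ≤ ℓ → ℓ ≤ L →
      Real.sqrt (∑ m, ∑ p, (Yhat ℓ m p - Y ℓ m p) ^ 2) ≤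
        ε₁ * Real.sqrt (∏ j ∈ Finset.Icc 2 ℓ, γ j) :=
  netTrim_cascade_error_bound_general d P L W What Y Yhat γ ε₁ hε₁ hγ hY hYhat hWnorm hfirst hfeas1
    hfeas2
end

section
/- Consider the convex program min_{w,s} ‖w‖_1 subject to X̃ [w; s] = y and s ⪯ 0, where X̃ ∈ ℝ^{m×(n₁+n₂)}, w ∈ ℝ^{n₁}, s ∈ ℝ^{n₂}. Suppose (w*, s*) is feasible, and there exists Λ ∈ ℝ^{n₁+n₂} in the row space of X̃ (i.e., Λ = X̃ᵀν for some ν) such that: Λ_ℓ = sign(w*_ℓ) for ℓ ∈ supp(w*), |Λ_ℓ| < 1 for ℓ ∉ supp(w*) (ℓ ≤ n₁), Λ_{n₁+ℓ} = 0 for ℓ ∈ supp(s*), Λ_{n₁+ℓ} > 0 for ℓ ∉ supp(s*). If moreover the submatrix of X̃ restricted to columns Γ̃ = supp(w*) ∪ {n₁ + supp(s*)} has full column rank, then (w*, s*) is the unique minimizer. -/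
open Finset

/-- Proposition 2 (dual certificate uniqueness): if a feasible pair `(w*, s*)` for
`min ‖w‖₁ s.t. X̃[w;s] = y, s ⪯ 0` admits a dual certificate `Λ = X̃ᵀν` with the stated
sign/strictness properties and the columns of `X̃` on the joint support are linearly
independent, then `(w*, s*)` is the unique minimizer. -/
theorem netTrim_dual_certificate_uniqueness
    {m n₁ n₂ : ℕ} (Xt : Matrix (Fin m) (Fin n₁ ⊕ Fin n₂) ℝ) (y : Fin m → ℝ)
    (wstar : Fin n₁ → ℝ) (sstar : Fin n₂ → ℝ)
    (hfeas_eq : Xt.mulVec (Sum.elim wstar sstar) = y)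
    (hfeas_le : ∀ ℓ, sstar ℓ ≤ 0)
    (Λ : Fin n₁ ⊕ Fin n₂ → ℝ) (ν : Fin m → ℝ)
    (hΛ : ∀ j, Λ j = ∑ i, Xt i j * ν i)
    (hsign : ∀ ℓ, wstar ℓ ≠ 0 → Λ (Sum.inl ℓ) = Real.sign (wstar ℓ))
    (hstrict : ∀ ℓ, wstar ℓ = 0 → |Λ (Sum.inl ℓ)| < 1)
    (hzero : ∀ ℓ, sstar ℓ ≠ 0 → Λ (Sum.inr ℓ) = 0)
    (hpos : ∀ ℓ, sstar ℓ = 0 → 0 < Λ (Sum.inr ℓ))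
    (hrank : LinearIndependent ℝ
      (fun j : {j : Fin n₁ ⊕ Fin n₂ // Sum.elim (fun ℓ => wstar ℓ ≠ 0) (fun ℓ => sstar ℓ ≠ 0) j} =>
        (fun i => Xt i j.1 : Fin m → ℝ))) :
    ∀ (w : Fin n₁ → ℝ) (s : Fin n₂ → ℝ),
      Xt.mulVec (Sum.elim w s) = y → (∀ ℓ, s ℓ ≤ 0) →
        (∑ ℓ, |wstar ℓ| ≤ ∑ ℓ, |w ℓ|) ∧
        (∑ ℓ, |w ℓ| = ∑ ℓ, |wstar ℓ| → w = wstar ∧ s = sstar) := by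
  intro w s hfeq hfle
  classical
  set P : Fin n₁ ⊕ Fin n₂ → Prop :=
    Sum.elim (fun ℓ => wstar ℓ ≠ 0) (fun ℓ => sstar ℓ ≠ 0) with hP
  set h : Fin n₁ ⊕ Fin n₂ → ℝ :=
    (Sum.elim w s) - (Sum.elim wstar sstar) with hh
  have hker : Xt.mulVec h = 0 := by
    rw [hh, Matrix.mulVec_sub, hfeq, hfeas_eq, sub_self]
  have hS : ∑ j, Λ j * h j = 0 := by
    have e1 : ∑ j, Λ j * h j = ∑ i, ν i * Xt.mulVec h i := by
      simp_rw [hΛ, Matrix.mulVec, dotProduct, Finset.sum_mul, Finset.mul_sum]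
      rw [Finset.sum_comm]
      exact Finset.sum_congr rfl fun i _ => Finset.sum_congr rfl fun j _ => by ring
    rw [e1, hker]
    simp
  have hSsplit : ∑ ℓ, Λ (Sum.inl ℓ) * (w ℓ - wstar ℓ)
      + ∑ ℓ, Λ (Sum.inr ℓ) * (s ℓ - sstar ℓ) = 0 := by
    rw [← hS, Fintype.sum_sum_type]
    simp [hh]
  have key1 : ∀ ℓ : Fin n₁, 0 ≤ |w ℓ| - |wstar ℓ| - Λ (Sum.inl ℓ) * (w ℓ - wstar ℓ) := by
    intro ℓ
    by_cases hw : wstar ℓ = 0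
    · have hlt := hstrict ℓ hw
      have h1 : Λ (Sum.inl ℓ) * w ℓ ≤ |w ℓ| :=
        calc Λ (Sum.inl ℓ) * w ℓ ≤ |Λ (Sum.inl ℓ) * w ℓ| := le_abs_self _
          _ = |Λ (Sum.inl ℓ)| * |w ℓ| := abs_mul _ _
          _ ≤ 1 * |w ℓ| := by nlinarith [abs_nonneg (w ℓ)]
          _ = |w ℓ| := one_mul _
      rw [hw]
      simp only [abs_zero, sub_zero]
      linarith
    · rw [hsign ℓ hw]
      rcases lt_or_gt_of_ne hw with hneg | hposw
      · rw [Real.sign_of_neg hneg]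
        rcases abs_cases (w ℓ) with ⟨e, _⟩ | ⟨e, _⟩ <;>
          rw [e, abs_of_neg hneg] <;> linarith
      · rw [Real.sign_of_pos hposw]
        rcases abs_cases (w ℓ) with ⟨e, _⟩ | ⟨e, _⟩ <;>
          rw [e, abs_of_pos hposw] <;> linarith
  have key2 : ∀ ℓ : Fin n₂, 0 ≤ -(Λ (Sum.inr ℓ) * (s ℓ - sstar ℓ)) := by
    intro ℓ
    by_cases hs : sstar ℓ = 0
    · have h1 := hpos ℓ hs
      have h2 := hfle ℓ
      rw [hs]
      nlinarith
    · rw [hzero ℓ hs]; simp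
  have hsum : ∑ ℓ, |w ℓ| - ∑ ℓ, |wstar ℓ| =
      (∑ ℓ, (|w ℓ| - |wstar ℓ| - Λ (Sum.inl ℓ) * (w ℓ - wstar ℓ)))
      + (∑ ℓ, -(Λ (Sum.inr ℓ) * (s ℓ - sstar ℓ))) := by
    rw [Finset.sum_sub_distrib, Finset.sum_sub_distrib, Finset.sum_neg_distrib]
    linarith [hSsplit]
  have hA : (0:ℝ) ≤ ∑ ℓ, (|w ℓ| - |wstar ℓ| - Λ (Sum.inl ℓ) * (w ℓ - wstar ℓ)) :=
    Finset.sum_nonneg fun ℓ _ => key1 ℓ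
  have hB : (0:ℝ) ≤ ∑ ℓ, -(Λ (Sum.inr ℓ) * (s ℓ - sstar ℓ)) :=
    Finset.sum_nonneg fun ℓ _ => key2 ℓ
  refine ⟨by linarith, ?_⟩
  intro heq
  have hA0 : ∑ ℓ, (|w ℓ| - |wstar ℓ| - Λ (Sum.inl ℓ) * (w ℓ - wstar ℓ)) = 0 := by linarith
  have hB0 : ∑ ℓ, -(Λ (Sum.inr ℓ) * (s ℓ - sstar ℓ)) = 0 := by linarith
  have hA0' : ∀ ℓ ∈ Finset.univ, |w ℓ| - |wstar ℓ| - Λ (Sum.inl ℓ) * (w ℓ - wstar ℓ) = 0 :=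
    (Finset.sum_eq_zero_iff_of_nonneg (fun ℓ _ => key1 ℓ)).mp hA0
  have hB0' : ∀ ℓ ∈ Finset.univ, -(Λ (Sum.inr ℓ) * (s ℓ - sstar ℓ)) = 0 :=
    (Finset.sum_eq_zero_iff_of_nonneg (fun ℓ _ => key2 ℓ)).mp hB0
  -- off-support vanishing
  have hout : ∀ j, ¬ P j → h j = 0 := by
    intro j hj
    rcases j with ℓ | ℓ
    · have hw : wstar ℓ = 0 := by simpa [hP] using hj
      have hterm := hA0' ℓ (Finset.mem_univ ℓ)
      rw [hw] at hterm
      simp only [abs_zero, sub_zero] at hterm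
      have hwz : w ℓ = 0 := by
        by_contra hwn
        have hlt := hstrict ℓ hw
        have habs : |w ℓ| > 0 := abs_pos.mpr hwn
        have : Λ (Sum.inl ℓ) * w ℓ ≤ |Λ (Sum.inl ℓ)| * |w ℓ| := by
          calc Λ (Sum.inl ℓ) * w ℓ ≤ |Λ (Sum.inl ℓ) * w ℓ| := le_abs_self _
            _ = |Λ (Sum.inl ℓ)| * |w ℓ| := abs_mul _ _
        nlinarith
      simp [hh, hwz, hw]
    · have hs : sstar ℓ = 0 := by simpa [hP] using hj
      have hterm := hB0' ℓ (Finset.mem_univ ℓ)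
      rw [hs] at hterm
      have h1 := hpos ℓ hs
      have hsz : s ℓ = 0 := by
        have : Λ (Sum.inr ℓ) * (s ℓ - 0) = 0 := by linarith
        rcases mul_eq_zero.mp this with h' | h'
        · exact absurd h' (ne_of_gt h1)
        · linarith
      simp [hh, hsz, hs]
  -- linear independence kills the rest
  have hall : ∀ j, h j = 0 := by
    have hli := Fintype.linearIndependent_iff.mp hrank (fun j => h j.1) ?_
    · intro j
      by_cases hj : P j
      · exact hli ⟨j, hj⟩
      · exact hout j hj
    · funext i
      simp only [Finset.sum_apply, Pi.smul_apply, smul_eq_mul, Pi.zero_apply]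
      have e1 : ∑ j : {j // P j}, h j.1 * Xt i j.1
          = ∑ j ∈ Finset.univ.filter P, h j * Xt i j :=
        (Finset.sum_subtype (Finset.univ.filter P) (by simp) (fun j => h j * Xt i j)).symm
      have e2 : ∑ j ∈ Finset.univ.filter P, h j * Xt i j = ∑ j, h j * Xt i j := by
        refine Finset.sum_subset (Finset.filter_subset _ _) ?_
        intro j _ hj
        rw [hout j (by simpa using hj), zero_mul]
      have e3 : ∑ j, h j * Xt i j = 0 := by
        have := congrFun hker i
        simpa [Matrix.mulVec, dotProduct, mul_comm] using this
      rw [e1, e2, e3]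
  constructor
  · funext ℓ
    have := hall (Sum.inl ℓ)
    simp only [hh, Pi.sub_apply, Sum.elim_inl] at this
    linarith
  · funext ℓ
    have := hall (Sum.inr ℓ)
    simp only [hh, Pi.sub_apply, Sum.elim_inr] at this
    linarith
end

section
/- Let (w*, s*) be feasible for min ‖w‖_1 s.t. X̃[w;s] = y, s ⪯ 0, and let Λ = X̃ᵀν satisfy Λ_ℓ = sign(w*_ℓ) on supp(w*), |Λ_ℓ| < 1 off supp(w*), Λ_{n₁+ℓ} = 0 on supp(s*), Λ_{n₁+ℓ} > 0 off supp(s*). Then for any feasible (w', s') with ‖w'‖_1 = ‖w*‖_1, the vector [w'; s'] must be supported on Γ̃ = supp(w*) ∪ {n₁ + supp(s*)}. -/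
open Finset

/-- Support-containment step of the dual certificate argument: any feasible `(w', s')`
achieving the same ℓ1 objective value as `(w*, s*)` must be supported on
`Γ̃ = supp(w*) ∪ {n₁ + supp(s*)}`. -/
theorem netTrim_dual_certificate_support
    {m n₁ n₂ : ℕ} (Xt : Matrix (Fin m) (Fin n₁ ⊕ Fin n₂) ℝ) (y : Fin m → ℝ)
    (wstar : Fin n₁ → ℝ) (sstar : Fin n₂ → ℝ)
    (hfeas_eq : Xt.mulVec (Sum.elim wstar sstar) = y)
    (hfeas_le : ∀ ℓ, sstar ℓ ≤ 0)
    (Λ : Fin n₁ ⊕ Fin n₂ → ℝ) (ν : Fin m → ℝ)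
    (hΛ : ∀ j, Λ j = ∑ i, Xt i j * ν i)
    (hsign : ∀ ℓ, wstar ℓ ≠ 0 → Λ (Sum.inl ℓ) = Real.sign (wstar ℓ))
    (hstrict : ∀ ℓ, wstar ℓ = 0 → |Λ (Sum.inl ℓ)| < 1)
    (hzero : ∀ ℓ, sstar ℓ ≠ 0 → Λ (Sum.inr ℓ) = 0)
    (hpos : ∀ ℓ, sstar ℓ = 0 → 0 < Λ (Sum.inr ℓ))
    (w : Fin n₁ → ℝ) (s : Fin n₂ → ℝ)
    (hfeas_eq' : Xt.mulVec (Sum.elim w s) = y)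
    (hfeas_le' : ∀ ℓ, s ℓ ≤ 0)
    (hobj : ∑ ℓ, |w ℓ| = ∑ ℓ, |wstar ℓ|) :
    ∀ j : Fin n₁ ⊕ Fin n₂,
      ¬ Sum.elim (fun ℓ => wstar ℓ ≠ 0) (fun ℓ => sstar ℓ ≠ 0) j →
        Sum.elim w s j = 0 := by
  -- key: ⟨Λ, u⟩ = ⟨ν, Xt u⟩
  have key : ∀ u : Fin n₁ ⊕ Fin n₂ → ℝ,
      ∑ j, Λ j * u j = ∑ i, ν i * Xt.mulVec u i := by
    intro u
    simp only [hΛ, Matrix.mulVec, dotProduct, Finset.sum_mul, Finset.mul_sum]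
    rw [Finset.sum_comm]
    congr 1; ext i; congr 1; ext j; ring
  have hbound : ∀ ℓ, |Λ (Sum.inl ℓ)| ≤ 1 := by
    intro ℓ
    by_cases h : wstar ℓ = 0
    · exact (hstrict ℓ h).le
    · rw [hsign ℓ h]
      rcases lt_trichotomy (wstar ℓ) 0 with hl | hl | hl
      · simp [Real.sign_of_neg hl]
      · exact absurd hl h
      · simp [Real.sign_of_pos hl]
  have heq : ∑ j, Λ j * Sum.elim w s j = ∑ j, Λ j * Sum.elim wstar sstar j := by
    rw [key, key, hfeas_eq, hfeas_eq']
  -- RHS equals ∑ |wstar|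
  have hrhs : ∑ j, Λ j * Sum.elim wstar sstar j = ∑ ℓ, |wstar ℓ| := by
    rw [Fintype.sum_sum_type]
    have h1 : ∀ ℓ : Fin n₁, Λ (Sum.inl ℓ) * wstar ℓ = |wstar ℓ| := by
      intro ℓ
      by_cases h : wstar ℓ = 0
      · simp [h]
      · rw [hsign ℓ h]
        rcases lt_trichotomy (wstar ℓ) 0 with hl | hl | hl
        · rw [Real.sign_of_neg hl, abs_of_neg hl]; ring
        · exact absurd hl h
        · rw [Real.sign_of_pos hl, abs_of_pos hl]; ring
    have h2 : ∀ ℓ : Fin n₂, Λ (Sum.inr ℓ) * sstar ℓ = 0 := by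
      intro ℓ
      by_cases h : sstar ℓ = 0
      · simp [h]
      · simp [hzero ℓ h]
    simp only [Sum.elim_inl, Sum.elim_inr, h1, h2]
    simp
  -- termwise inequality with G
  set G : Fin n₁ ⊕ Fin n₂ → ℝ := Sum.elim (fun ℓ => |w ℓ|) (fun _ => 0) with hG
  have hle : ∀ j, Λ j * Sum.elim w s j ≤ G j := by
    intro j
    cases j with
    | inl ℓ =>
      simp only [hG, Sum.elim_inl]
      calc Λ (Sum.inl ℓ) * w ℓ ≤ |Λ (Sum.inl ℓ) * w ℓ| := le_abs_self _
        _ = |Λ (Sum.inl ℓ)| * |w ℓ| := abs_mul _ _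
        _ ≤ 1 * |w ℓ| := by
            exact mul_le_mul_of_nonneg_right (hbound ℓ) (abs_nonneg _)
        _ = |w ℓ| := one_mul _
    | inr ℓ =>
      simp only [hG, Sum.elim_inr]
      have h1 : 0 ≤ Λ (Sum.inr ℓ) := by
        by_cases h : sstar ℓ = 0
        · exact (hpos ℓ h).le
        · rw [hzero ℓ h]
      exact mul_nonpos_of_nonneg_of_nonpos h1 (hfeas_le' ℓ)
  have hsumG : ∑ j, G j = ∑ ℓ, |w ℓ| := by
    rw [hG, Fintype.sum_sum_type]; simp
  have hsum_eq : ∑ j, Λ j * Sum.elim w s j = ∑ j, G j := by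
    rw [heq, hrhs, hsumG, hobj]
  have htermwise : ∀ j, Λ j * Sum.elim w s j = G j := by
    have := (Finset.sum_eq_sum_iff_of_le (fun j _ => hle j)).mp hsum_eq
    intro j; exact this j (Finset.mem_univ j)
  intro j hj
  cases j with
  | inl ℓ =>
    simp only [Sum.elim_inl, not_not] at hj ⊢
    by_contra hw
    have h1 := htermwise (Sum.inl ℓ)
    simp only [hG, Sum.elim_inl] at h1
    have : |w ℓ| < |w ℓ| := by
      calc |w ℓ| = Λ (Sum.inl ℓ) * w ℓ := h1.symm
        _ ≤ |Λ (Sum.inl ℓ) * w ℓ| := le_abs_self _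
        _ = |Λ (Sum.inl ℓ)| * |w ℓ| := abs_mul _ _
        _ < 1 * |w ℓ| := by
            exact mul_lt_mul_of_pos_right (hstrict ℓ hj) (abs_pos.mpr hw)
        _ = |w ℓ| := one_mul _
    exact lt_irrefl _ this
  | inr ℓ =>
    simp only [Sum.elim_inr, not_not] at hj ⊢
    have h1 := htermwise (Sum.inr ℓ)
    simp only [hG, Sum.elim_inr] at h1
    have hp := hpos ℓ hj
    exact (mul_eq_zero.mp h1).resolve_left (ne_of_gt hp)
end
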